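/- arXiv:1211.0816 — 2 statements merged into one kernel-verified Lean document; each statement's English description precedes it below -/
import Mathlib

section
/- With M_n(u) the Motzkin polynomials and x an indeterminate, det((x·M_{i+j+1}(u) − M_{i+j+2}(u))_{i,j=0}^{n}) = Σ_{k=0}^{n+1} (−1)^{n+1−k} F_{k+1}(u, −1)·F_{k+1}(x − u, −1). -/
/-!
Let `J` be the tridiagonal matrix with `u` on the diagonal and `1` on both off-diagonals.
Separating the level steps of a weighted Motzkin path from its up and down steps gives
`(J ^ m) 0 b = ∑ j, C(m, j) u ^ (m - j) B(j, b)` with `B` the ballot numbers, and `B(2k, 0)` is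
the `k`-th Catalan number, so `M_m(u) = (J ^ m) 0 0`; truncating `J` at size `n + 2` leaves the
moments up to `M_{2n+2}` unchanged. Since `J` is symmetric,
`x M_{i+j+1} - M_{i+j+2} = (J ^ i (x J - J²) J ^ j) 0 0` factors the Hankel matrix as `A G Aᵀ`,
where `A i b = (J ^ i) 0 b` is unitriangular and `G` is the leading `(n + 1)`-block of `x J - J²`.
The path through the cut-off vertex makes that block `J' (x - J') - E`, with `J'` the Jacobi matrix
of size `n + 1` and `E` the matrix unit in its last corner, and expanding along the last row gives
`det G_{N+1} = det J_{N+1} · det (x - J_{N+1}) - det G_N`. Both tridiagonal determinants obey the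
Fibonacci recursion, so they are `F_{N+2}(u, -1)` and `F_{N+2}(x - u, -1)`, and the alternating
sum follows by induction.
-/

namespace MotzkinHankel

open Finset Matrix

variable {R : Type*} [CommRing R]

-- `ballot j b` counts the `±1` paths of length `j` from height `0` to `b` that stay `≥ 0`.
def ballot : ℕ → ℕ → ℕ
  | 0, b => if b = 0 then 1 else 0
  | j + 1, 0 => ballot j 1
  | j + 1, b + 1 => ballot j b + ballot j (b + 2)

theorem ballot_eq_zero_of_lt {j b : ℕ} (h : j < b) : ballot j b = 0 := by
  induction j generalizing b with
  | zero => simp [ballot, Nat.pos_iff_ne_zero.mp h]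
  | succ j ih =>
    obtain ⟨b, rfl⟩ : ∃ b', b = b' + 1 := ⟨b - 1, by omega⟩
    rw [ballot, ih (by omega), ih (by omega)]

theorem ballot_eq_zero_of_odd {j b : ℕ} (h : Odd (j + b)) : ballot j b = 0 := by
  induction j generalizing b with
  | zero =>
    rw [ballot, if_neg]
    rintro rfl
    simp at h
  | succ j ih =>
    rcases b with _ | b
    · exact ih (by simpa using h)
    · rw [Nat.odd_iff] at h
      rw [ballot, ih (by rw [Nat.odd_iff]; omega), ih (by rw [Nat.odd_iff]; omega)]

theorem ballot_self (b : ℕ) : ballot b b = 1 := by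
  induction b with
  | zero => rfl
  | succ b ih => rw [ballot, ih, ballot_eq_zero_of_lt (by omega)]

theorem ballot_add_choose (b k : ℕ) :
    ballot (b + 2 * k) b + (b + 2 * k).choose (b + k + 1) = (b + 2 * k).choose k := by
  induction k generalizing b with
  | zero => simp [ballot_self]
  | succ k ih =>
    induction b with
    | zero =>
      have h := ih 1
      have p1 : (2 * k + 1 + 1).choose (k + 1)
          = (2 * k + 1).choose k + (2 * k + 1).choose (k + 1) := Nat.choose_succ_succ _ _
      have p2 : (2 * k + 1 + 1).choose (k + 1 + 1)
          = (2 * k + 1).choose (k + 1) + (2 * k + 1).choose (k + 2) := Nat.choose_succ_succ _ _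
      rw [show 1 + 2 * k = 2 * k + 1 by ring, show 1 + k + 1 = k + 2 by ring] at h
      rw [show 0 + 2 * (k + 1) = 2 * k + 1 + 1 by ring, show 0 + (k + 1) + 1 = k + 1 + 1 by ring]
      change ballot (2 * k + 1) 1 + _ = _
      omega
    | succ b ihb =>
      have h := ih (b + 2)
      have p1 : (b + 2 * k + 2 + 1).choose (k + 1)
          = (b + 2 * k + 2).choose k + (b + 2 * k + 2).choose (k + 1) := Nat.choose_succ_succ _ _
      have p2 : (b + 2 * k + 2 + 1).choose (b + k + 2 + 1)
          = (b + 2 * k + 2).choose (b + k + 2) + (b + 2 * k + 2).choose (b + k + 2 + 1) :=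
        Nat.choose_succ_succ _ _
      rw [show b + 2 + 2 * k = b + 2 * k + 2 by ring,
        show b + 2 + k + 1 = b + k + 2 + 1 by ring] at h
      rw [show b + 2 * (k + 1) = b + 2 * k + 2 by ring,
        show b + (k + 1) + 1 = b + k + 2 by ring] at ihb
      rw [show b + 1 + 2 * (k + 1) = b + 2 * k + 2 + 1 by ring,
        show b + 1 + (k + 1) + 1 = b + k + 2 + 1 by ring]
      change ballot (b + 2 * k + 2) b + ballot (b + 2 * k + 2) (b + 2) + _ = _
      omega

theorem ballot_two_mul_zero (k : ℕ) : ballot (2 * k) 0 = catalan k := by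
  have h := ballot_add_choose 0 k
  simp only [zero_add] at h
  have h1 := succ_mul_catalan_eq_centralBinom k
  have h2 := Nat.choose_succ_right_eq (2 * k) k
  rw [Nat.centralBinom, show 2 * k - k = k by omega] at *
  apply Nat.eq_of_mul_eq_mul_left k.succ_pos
  zify at *
  linear_combination (k + 1) * h - h2 - h1

def tridiag (N : ℕ) (d p q : R) : Matrix (Fin N) (Fin N) R :=
  of fun i j => (if (i : ℕ) = j then d else 0) + (if (i : ℕ) + 1 = j then p else 0)
    + (if (j : ℕ) + 1 = i then q else 0)

theorem tridiag_transpose (N : ℕ) (d p q : R) : (tridiag N d p q)ᵀ = tridiag N d q p := by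
  ext i j
  simp only [tridiag, transpose_apply, of_apply, eq_comm (a := (j : ℕ))]
  ring

theorem tridiag_submatrix {M N : ℕ} (d p q : R) {f g : Fin M → Fin N} (c : ℕ)
    (hf : ∀ i, (f i : ℕ) = i + c) (hg : ∀ i, (g i : ℕ) = i + c) :
    (tridiag N d p q).submatrix f g = tridiag M d p q := by
  ext i j
  simp only [tridiag, submatrix_apply, of_apply, hf, hg, add_right_comm _ c 1, add_left_inj]

theorem tridiag_submatrix_castSucc (N : ℕ) (d p q : R) :
    (tridiag (N + 1) d p q).submatrix Fin.castSucc Fin.castSucc = tridiag N d p q :=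
  tridiag_submatrix d p q 0 (fun _ => rfl) fun _ => rfl

theorem smul_one_sub_tridiag (N : ℕ) (x d p q : R) :
    x • (1 : Matrix (Fin N) (Fin N) R) - tridiag N d p q = tridiag N (x - d) (-p) (-q) := by
  ext i j
  simp only [tridiag, Matrix.sub_apply, Matrix.smul_apply, one_apply, Fin.ext_iff, of_apply,
    smul_eq_mul]
  split_ifs <;> ring

theorem tridiag_eq_add_smul_one (N : ℕ) (d p q : R) :
    tridiag N d p q = tridiag N 0 p q + d • (1 : Matrix (Fin N) (Fin N) R) := by
  ext i j
  simp only [tridiag, Matrix.add_apply, Matrix.smul_apply, one_apply, Fin.ext_iff, of_apply,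
    smul_eq_mul]
  split_ifs <;> ring

theorem sum_mul_tridiag_apply {N : ℕ} (d p q : R) (f : ℕ → R) (b : Fin N) :
    ∑ c : Fin N, f c * tridiag N d p q c b
      = d * f b + (if (b : ℕ) = 0 then 0 else p * f (b - 1))
        + (if (b : ℕ) + 1 < N then q * f (b + 1) else 0) := by
  change ∑ c : Fin N, f c * ((if (c : ℕ) = b then d else 0)
    + (if (c : ℕ) + 1 = b then p else 0) + (if (b : ℕ) + 1 = c then q else 0)) = _
  rw [Fin.sum_univ_eq_sum_range (fun c => f c * ((if c = b then d else 0)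
    + (if c + 1 = b then p else 0) + (if (b : ℕ) + 1 = c then q else 0)))]
  simp only [mul_add, mul_ite, mul_zero, sum_add_distrib, sum_ite_eq', sum_ite_eq, mem_range,
    b.isLt, if_true]
  rcases b with ⟨_ | b, hb⟩
  · simp [mul_comm]
  · simp [Nat.lt_of_succ_lt hb, mul_comm]

theorem det_tridiag_add_two (N : ℕ) (d p q : R) :
    (tridiag (N + 2) d p q).det
      = d * (tridiag (N + 1) d p q).det - p * q * (tridiag N d p q).det := by
  rw [det_succ_row_zero, Fin.sum_univ_succ, Fin.sum_univ_succ, Fin.succAbove_zero,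
    tridiag_submatrix d p q 1 (fun _ => rfl) (fun _ => rfl)]
  have hminor : ((tridiag (N + 2) d p q).submatrix Fin.succ (Fin.succAbove 1)).det
      = q * (tridiag N d p q).det := by
    rw [det_succ_column_zero, Fin.sum_univ_succ, Fin.succAbove_zero, submatrix_submatrix,
      tridiag_submatrix (M := N) d p q 2 (fun _ => by simp) (fun _ => by simp)]
    simp [tridiag]
  have h00 : tridiag (N + 2) d p q 0 0 = d := by simp [tridiag]
  have h01 : tridiag (N + 2) d p q 0 (Fin.succ 0) = p := by simp [tridiag]
  have h0 : ∀ i : Fin N, tridiag (N + 2) d p q 0 i.succ.succ = 0 := by simp [tridiag]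
  simp only [Fin.succ_zero_eq_one] at h01 ⊢
  simp only [h00, h01, h0, hminor, mul_zero, zero_mul, sum_const_zero, add_zero, Fin.val_zero,
    Fin.val_succ, Fin.val_one, pow_zero, pow_one]
  ring

open Polynomial in
theorem det_tridiag_eq_aeval_S (N : ℕ) (d p q : R) (hpq : p * q = 1) :
    (tridiag N d p q).det = aeval d (Chebyshev.S ℤ N) := by
  induction N using Nat.twoStepInduction with
  | zero => simp
  | one => simp [tridiag]
  | more N ih₀ ih₁ =>
    rw [det_tridiag_add_two, ih₀, ih₁, hpq, one_mul,
      show ((N + 2 : ℕ) : ℤ) = N + 2 by push_cast; ring, Chebyshev.S_add_two]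
    push_cast
    simp

-- `j + b < 2 (N + 1)` keeps the paths counted by `ballot j b` below the cut-off height `N + 1`.
theorem pow_tridiag_zero_one_one_apply_zero {N j : ℕ} (b : Fin (N + 1))
    (h : j + b < 2 * (N + 1)) :
    ((tridiag (N + 1) (0 : R) 1 1) ^ j) 0 b = ballot j b := by
  induction j generalizing b with
  | zero =>
    rw [pow_zero, one_apply]
    rcases b with ⟨_ | b, hb⟩ <;> simp [ballot, Fin.ext_iff]
  | succ j ih =>
    rw [pow_succ, mul_apply]
    have hc : ∀ c, ((tridiag (N + 1) (0 : R) 1 1) ^ j) 0 c * tridiag (N + 1) 0 1 1 c b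
        = (ballot j c : R) * tridiag (N + 1) 0 1 1 c b := by
      intro c
      by_cases hcb : (c : ℕ) + 1 = b ∨ (b : ℕ) + 1 = c
      · rw [ih c (by omega)]
      · have hzero : tridiag (N + 1) (0 : R) 1 1 c b = 0 := by
          simp only [not_or] at hcb
          simp [tridiag, hcb.1, hcb.2]
        rw [hzero, mul_zero, mul_zero]
    rw [sum_congr rfl fun c _ => hc c, sum_mul_tridiag_apply 0 1 1 fun c => (ballot j c : R)]
    have hlast : ¬ (b : ℕ) + 1 < N + 1 → ballot j (b + 1) = 0 :=
      fun _ => ballot_eq_zero_of_lt (by omega)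
    rcases b with ⟨_ | b, hb⟩ <;> split_ifs at hlast ⊢ <;> simp_all [ballot]

theorem pow_tridiag_one_one_apply_zero {N m : ℕ} (u : R) (b : Fin (N + 1))
    (h : m + b < 2 * (N + 1)) :
    ((tridiag (N + 1) u 1 1) ^ m) 0 b
      = ∑ j ∈ range (m + 1), u ^ (m - j) * m.choose j * ballot j b := by
  rw [tridiag_eq_add_smul_one,
    (Commute.smul_right (Commute.one_right (tridiag (N + 1) (0 : R) 1 1)) u).add_pow,
    Matrix.sum_apply]
  refine sum_congr rfl fun j hj => ?_
  rw [mem_range] at hj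
  simp [smul_pow, ← nsmul_eq_mul', pow_tridiag_zero_one_one_apply_zero b (by omega : j + b < _)]
  ring

theorem pow_tridiag_one_one_apply_zero_of_lt {N m : ℕ} (u : R) (b : Fin (N + 1)) (h : m < b) :
    ((tridiag (N + 1) u 1 1) ^ m) 0 b = 0 := by
  rw [pow_tridiag_one_one_apply_zero u b (by omega)]
  refine sum_eq_zero fun j hj => ?_
  rw [ballot_eq_zero_of_lt (by rw [mem_range] at hj; omega), Nat.cast_zero, mul_zero]

theorem pow_tridiag_one_one_apply_zero_self {N m : ℕ} (u : R) (hm : m < N + 1) :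
    ((tridiag (N + 1) u 1 1) ^ m) 0 ⟨m, hm⟩ = 1 := by
  rw [pow_tridiag_one_one_apply_zero u _ (by simp; omega), sum_eq_single_of_mem m (by simp)]
  · simp [ballot_self]
  · intro j hj hjm
    rw [ballot_eq_zero_of_lt (by rw [mem_range] at hj; simp; omega), Nat.cast_zero, mul_zero]

theorem pow_tridiag_one_one_apply_zero_zero {N m : ℕ} (u : R) (h : m < 2 * (N + 1)) :
    ((tridiag (N + 1) u 1 1) ^ m) 0 0
      = ∑ k ∈ range (m / 2 + 1),
          ((m.choose (2 * k) * catalan k : ℕ) : R) * u ^ (m - 2 * k) := by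
  set g : ℕ → R := fun j => u ^ (m - j) * m.choose j * ballot j 0
  calc ((tridiag (N + 1) u 1 1) ^ m) 0 0 = ∑ j ∈ range (m + 1), g j :=
        pow_tridiag_one_one_apply_zero u 0 (by simpa using h)
    _ = ∑ j ∈ (range (m / 2 + 1)).image (2 * ·), g j := by
        refine (sum_subset (fun j => by simp; omega) fun j hj hj' => ?_).symm
        have hodd : Odd (j + 0) := by
          simp only [mem_image, mem_range, not_exists, not_and] at hj hj'
          have := hj' (j / 2) (by omega)
          rw [Nat.odd_iff]
          omega
        simp [g, ballot_eq_zero_of_odd hodd]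
    _ = ∑ k ∈ range (m / 2 + 1), g (2 * k) := sum_image fun _ _ _ _ h => by simpa using h
    _ = _ := sum_congr rfl fun k _ => by simp [g, ballot_two_mul_zero]; ring

theorem sq_tridiag_submatrix_castSucc (N : ℕ) (d p q : R) :
    ((tridiag (N + 2) d p q) ^ 2).submatrix Fin.castSucc Fin.castSucc
      = (tridiag (N + 1) d p q) ^ 2 + single (Fin.last N) (Fin.last N) (p * q) := by
  have hT : ∀ a b, tridiag (N + 2) d p q a.castSucc b.castSucc = tridiag (N + 1) d p q a b :=
    fun a b => congrFun (congrFun (tridiag_submatrix_castSucc (N + 1) d p q) a) b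
  ext i j
  rw [submatrix_apply, sq, sq, Matrix.add_apply, mul_apply, mul_apply, Fin.sum_univ_castSucc]
  simp only [hT]
  congr 1
  have hi := i.isLt
  have hj := j.isLt
  simp only [tridiag, of_apply, single_apply, Fin.val_castSucc, Fin.val_last, Fin.ext_iff]
  split_ifs <;> first | omega | ring

theorem det_sub_single_last {N : ℕ} (A : Matrix (Fin (N + 1)) (Fin (N + 1)) R) (c : R) :
    (A - single (Fin.last N) (Fin.last N) c).det
      = A.det - c * (A.submatrix Fin.castSucc Fin.castSucc).det := by
  have hminor : ∀ j : Fin (N + 1),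
      (A - single (Fin.last N) (Fin.last N) c).submatrix (Fin.last N).succAbove j.succAbove
        = A.submatrix (Fin.last N).succAbove j.succAbove := by
    intro j
    ext k l
    simp [Fin.succAbove_last, Fin.castSucc_ne_last, eq_comm]
  rw [det_succ_row _ (Fin.last N), det_succ_row A (Fin.last N)]
  simp only [hminor, Matrix.sub_apply, mul_sub, sub_mul, sum_sub_distrib]
  congr 1
  rw [sum_eq_single (Fin.last N) (fun j _ hj => by simp [Ne.symm hj]) (by simp)]
  simp [Fin.succAbove_last, ← two_mul, pow_mul]

def jacobiQuadBlock (x u : R) (N : ℕ) : Matrix (Fin N) (Fin N) R :=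
  (x • tridiag (N + 1) u 1 1 - tridiag (N + 1) u 1 1 ^ 2).submatrix Fin.castSucc Fin.castSucc

theorem jacobiQuadBlock_succ (x u : R) (N : ℕ) :
    jacobiQuadBlock x u (N + 1) = (x • tridiag (N + 1) u 1 1 - tridiag (N + 1) u 1 1 ^ 2)
      - single (Fin.last N) (Fin.last N) 1 := by
  simp only [jacobiQuadBlock, submatrix_sub, submatrix_smul, Pi.sub_apply, Pi.smul_apply,
    sq_tridiag_submatrix_castSucc, mul_one, tridiag_submatrix_castSucc,
    sub_add_eq_sub_sub]

theorem det_jacobiQuadBlock_succ (x u : R) (N : ℕ) :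
    (jacobiQuadBlock x u (N + 1)).det
      = (tridiag (N + 1) u 1 1).det * (tridiag (N + 1) (x - u) (-1) (-1)).det
        - (jacobiQuadBlock x u N).det := by
  rw [jacobiQuadBlock_succ, det_sub_single_last, one_mul]
  congr 1
  rw [← det_mul, ← smul_one_sub_tridiag, Matrix.mul_sub, Matrix.mul_smul, mul_one, sq]

open Polynomial in
theorem det_jacobiQuadBlock (x u : R) (N : ℕ) :
    (jacobiQuadBlock x u N).det = ∑ k ∈ range (N + 1),
      (-1) ^ (N - k) * aeval u (Chebyshev.S ℤ k) * aeval (x - u) (Chebyshev.S ℤ k) := by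
  induction N with
  | zero => simp
  | succ N ih =>
    rw [det_jacobiQuadBlock_succ, ih, det_tridiag_eq_aeval_S _ _ _ _ (one_mul 1),
      det_tridiag_eq_aeval_S _ _ _ _ (by ring), sum_range_succ _ (N + 1), Nat.sub_self, pow_zero,
      one_mul, sub_eq_neg_add, ← sum_neg_distrib]
    congr 1
    refine sum_congr rfl fun k hk => ?_
    rw [mem_range] at hk
    rw [Nat.sub_add_comm (by omega), pow_succ]
    ring

theorem hankel_pow_tridiag_eq_mul_mul_transpose (x u : R) (n : ℕ) :
    (of fun i j : Fin (n + 1) => x * ((tridiag (n + 2) u 1 1) ^ ((i : ℕ) + j + 1)) 0 0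
      - ((tridiag (n + 2) u 1 1) ^ ((i : ℕ) + j + 2)) 0 0)
      = (of fun i b : Fin (n + 1) => ((tridiag (n + 2) u 1 1) ^ (i : ℕ)) 0 b.castSucc)
        * jacobiQuadBlock x u (n + 1)
        * (of fun i b : Fin (n + 1) => ((tridiag (n + 2) u 1 1) ^ (i : ℕ)) 0 b.castSucc)ᵀ := by
  set T := tridiag (n + 2) u 1 1
  have hsymm : ∀ j : ℕ, ∀ c, (T ^ j) c 0 = (T ^ j) 0 c := fun j c => by
    rw [← transpose_apply (T ^ j) 0 c, transpose_pow, tridiag_transpose]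
  have hlast : ∀ i : Fin (n + 1), (T ^ (i : ℕ)) 0 (Fin.last (n + 1)) = 0 := fun i =>
    pow_tridiag_one_one_apply_zero_of_lt u _ (by simp; omega)
  ext i j
  have hpow : T ^ (i : ℕ) * (x • T - T ^ 2) * T ^ (j : ℕ)
      = x • T ^ ((i : ℕ) + j + 1) - T ^ ((i : ℕ) + j + 2) := by
    rw [Matrix.mul_sub, Matrix.sub_mul, Matrix.mul_smul, Matrix.smul_mul, ← pow_succ, ← pow_add,
      ← pow_add, ← pow_add]
    ring_nf
  calc x * (T ^ ((i : ℕ) + j + 1)) 0 0 - (T ^ ((i : ℕ) + j + 2)) 0 0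
      = (T ^ (i : ℕ) * (x • T - T ^ 2) * T ^ (j : ℕ)) 0 0 := by simp [hpow]
    _ = ∑ c, (∑ b, (T ^ (i : ℕ)) 0 b * (x • T - T ^ 2) b c) * (T ^ (j : ℕ)) 0 c := by
      simp only [mul_apply, hsymm]
    _ = _ := by
      simp only [mul_apply, Fin.sum_univ_castSucc, hlast, zero_mul, mul_zero, add_zero]
      rfl

theorem det_hankel_pow_tridiag (x u : R) (n : ℕ) :
    (of fun i j : Fin (n + 1) => x * ((tridiag (n + 2) u 1 1) ^ ((i : ℕ) + j + 1)) 0 0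
      - ((tridiag (n + 2) u 1 1) ^ ((i : ℕ) + j + 2)) 0 0).det
      = (jacobiQuadBlock x u (n + 1)).det := by
  set A : Matrix (Fin (n + 1)) (Fin (n + 1)) R :=
    of fun i b => ((tridiag (n + 2) u 1 1) ^ (i : ℕ)) 0 b.castSucc
  have hA : A.det = 1 := by
    rw [det_of_isLowerTriangular A fun i b hib => pow_tridiag_one_one_apply_zero_of_lt u _ hib]
    exact prod_eq_one fun i _ => pow_tridiag_one_one_apply_zero_self u (by omega)
  rw [hankel_pow_tridiag_eq_mul_mul_transpose, det_mul, det_mul, det_transpose, hA, one_mul,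
    mul_one]

end MotzkinHankel

open Finset MvPolynomial

theorem motzkin_poly_linear_hankel_det (n : ℕ)
    (M : ℕ → MvPolynomial (Fin 2) ℤ)
    (hM : ∀ m, M m = ∑ k ∈ range (m / 2 + 1),
        MvPolynomial.C ((m.choose (2 * k) * catalan k : ℕ) : ℤ) * X 1 ^ (m - 2 * k))
    (F : ℕ → Polynomial ℤ)
    (hF0 : F 0 = 0) (hF1 : F 1 = 1)
    (hF : ∀ m, F (m + 2) = Polynomial.X * F (m + 1) - F m) :
    (Matrix.of fun i j : Fin (n + 1) =>
        X 0 * M ((i : ℕ) + (j : ℕ) + 1) - M ((i : ℕ) + (j : ℕ) + 2)).det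
      = ∑ k ∈ range (n + 2), (-1 : MvPolynomial (Fin 2) ℤ) ^ (n + 1 - k)
          * Polynomial.aeval (X 1) (F (k + 1))
          * Polynomial.aeval (X 0 - X 1) (F (k + 1)) := by
  have hmoment : ∀ m < 2 * (n + 2), M m = ((MotzkinHankel.tridiag (n + 2) (X 1) 1 1) ^ m) 0 0 :=
    fun m hm => by simp [hM, MotzkinHankel.pow_tridiag_one_one_apply_zero_zero _ hm]
  have hS : ∀ k : ℕ, F (k + 1) = Polynomial.Chebyshev.S ℤ k := by
    intro k
    induction k using Nat.twoStepInduction with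
    | zero => simp [hF1]
    | one => simp [hF, hF0, hF1]
    | more k ih₀ ih₁ =>
      rw [hF, ih₀, ih₁, show ((k + 2 : ℕ) : ℤ) = k + 2 by push_cast; ring,
        Polynomial.Chebyshev.S_add_two]
      push_cast
      ring_nf
  have hhankel : (Matrix.of fun i j : Fin (n + 1) =>
      X 0 * M ((i : ℕ) + (j : ℕ) + 1) - M ((i : ℕ) + (j : ℕ) + 2))
      = Matrix.of fun i j : Fin (n + 1) =>
        X 0 * ((MotzkinHankel.tridiag (n + 2) (X 1) 1 1) ^ ((i : ℕ) + j + 1)) 0 0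
          - ((MotzkinHankel.tridiag (n + 2) (X 1) 1 1) ^ ((i : ℕ) + j + 2)) 0 0 := by
    ext i j
    rw [Matrix.of_apply, Matrix.of_apply, hmoment _ (by omega), hmoment _ (by omega)]
  rw [hhankel, MotzkinHankel.det_hankel_pow_tridiag,
    MotzkinHankel.det_jacobiQuadBlock]
  -- The statement's `aeval` uses `MvPolynomial`'s own `ℤ`-algebra structure, the lemmas the
  -- generic one; `congr!` identifies them.
  exact sum_congr rfl fun k _ => by rw [hS]; congr!
end

section
/- Let (p_n(x)) be orthogonal polynomials satisfying p_n = x p_{n-1} − t_{n-2} p_{n-2} with p_{-1}=0, p_0=1, t_n ≠ 0, write p_n(x) = Σ_k (−1)^k v(n,k) x^{n−2k}, and let a(n) = Λ(x^{2n}) be the moments (Λ the functional with Λ(p_n) = [n=0]). Then for all n and all 0 ≤ m ≤ n: Σ_{k=0}^{n} (−1)^{n+k} v(2n+1, k)·a(n+m−k) = (t_1 t_3 ⋯ t_{2n−1})·[m = 0]. -/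
open Polynomial Finset

private lemma pair_sum {M : Type*} [AddCommMonoid M] (f : ℕ → M) (N : ℕ) :
    ∑ i ∈ range (2 * N), f i = ∑ k ∈ range N, (f (2 * k) + f (2 * k + 1)) := by
  induction N with
  | zero => simp
  | succ N ih =>
    rw [Finset.sum_range_succ, Nat.mul_succ, Finset.sum_range_succ, Finset.sum_range_succ,
      ih, add_assoc]

private lemma coeff_vanish (t : ℕ → ℚ) (p : ℕ → Polynomial ℚ)
    (hp0 : p 0 = 1) (hp1 : p 1 = X)
    (hp : ∀ n, p (n + 2) = X * p (n + 1) - Polynomial.C (t n) * p n) :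
    ∀ n j, (n < j ∨ (n + j) % 2 = 1) → (p n).coeff j = 0 := by
  intro n
  induction n using Nat.twoStepInduction with
  | zero =>
    intro j hj
    have : j ≠ 0 := by omega
    simp [hp0, coeff_one, this]
  | one =>
    intro j hj
    have : j ≠ 1 := by omega
    simp [hp1, coeff_X, Ne.symm this]
  | more n ih1 ih2 =>
    intro j hj
    rw [hp n, coeff_sub, coeff_C_mul]
    cases j with
    | zero =>
      rw [mul_coeff_zero, coeff_X_zero, zero_mul, ih1 0 (by omega)]
      ring
    | succ j =>
      rw [coeff_X_mul, ih2 j (by omega), ih1 (j + 1) (by omega)]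
      ring

/-- the even polynomial `r n` with `X * r n = p (2n+1)` -/
private noncomputable def rr (p : ℕ → Polynomial ℚ) (n : ℕ) : Polynomial ℚ :=
  ∑ k ∈ range (n + 1), Polynomial.C ((p (2 * n + 1)).coeff (2 * n + 1 - 2 * k)) * X ^ (2 * (n - k))

private lemma X_mul_rr (t : ℕ → ℚ) (p : ℕ → Polynomial ℚ)
    (hp0 : p 0 = 1) (hp1 : p 1 = X)
    (hp : ∀ n, p (n + 2) = X * p (n + 1) - Polynomial.C (t n) * p n) (n : ℕ) :
    X * rr p n = p (2 * n + 1) := by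
  have hdeg : (p (2 * n + 1)).natDegree < 2 * (n + 1) := by
    have : (p (2 * n + 1)).natDegree ≤ 2 * n + 1 :=
      Polynomial.natDegree_le_iff_coeff_eq_zero.mpr fun N hN =>
        coeff_vanish t p hp0 hp1 hp _ N (Or.inl hN)
    omega
  conv_rhs => rw [Polynomial.as_sum_range' _ _ hdeg, pair_sum]
  rw [rr, Finset.mul_sum, ← Finset.sum_range_reflect]
  apply Finset.sum_congr rfl
  intro k hk
  have hk' : k ≤ n := by
    have := Finset.mem_range.mp hk; omega
  have heven : (p (2 * n + 1)).coeff (2 * k) = 0 :=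
    coeff_vanish t p hp0 hp1 hp _ _ (Or.inr (by omega))
  rw [heven, monomial_zero_right, zero_add]
  have e1 : 2 * n + 1 - 2 * (n + 1 - 1 - k) = 2 * k + 1 := by omega
  have e2 : n - (n + 1 - 1 - k) = k := by omega
  rw [e1, e2, ← Polynomial.C_mul_X_pow_eq_monomial]
  ring

private lemma lamC (Λ : Polynomial ℚ →ₗ[ℚ] ℚ) (c : ℚ) (q : Polynomial ℚ) :
    Λ (Polynomial.C c * q) = c * Λ q := by
  rw [← Polynomial.smul_eq_C_mul, map_smul, smul_eq_mul]

private lemma orth (t : ℕ → ℚ) (p : ℕ → Polynomial ℚ)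
    (hp : ∀ n, p (n + 2) = X * p (n + 1) - Polynomial.C (t n) * p n)
    (Λ : Polynomial ℚ →ₗ[ℚ] ℚ)
    (hΛ : ∀ n, Λ (p n) = if n = 0 then 1 else 0) :
    ∀ j n, j < n → Λ (X ^ j * p n) = 0 := by
  intro j
  induction j with
  | zero =>
    intro n hn
    rw [pow_zero, one_mul, hΛ, if_neg (by omega)]
  | succ j ih =>
    intro n hn
    obtain ⟨n', rfl⟩ : ∃ n', n = n' + 2 := ⟨n - 2, by omega⟩
    have hx : X * p (n' + 2) = p (n' + 3) + Polynomial.C (t (n' + 1)) * p (n' + 1) := by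
      have h := hp (n' + 1)
      have e : n' + 1 + 2 = n' + 3 := by omega
      rw [e, show n' + 1 + 1 = n' + 2 from by omega] at h
      linear_combination -h
    rw [pow_succ, mul_assoc, hx, mul_add, map_add, ih (n' + 3) (by omega),
      show X ^ j * (Polynomial.C (t (n' + 1)) * p (n' + 1))
        = Polynomial.C (t (n' + 1)) * (X ^ j * p (n' + 1)) from by ring,
      lamC, ih (n' + 1) (by omega)]
    ring

private lemma lam_rr (t : ℕ → ℚ) (p : ℕ → Polynomial ℚ)
    (hp0 : p 0 = 1) (hp1 : p 1 = X)
    (hp : ∀ n, p (n + 2) = X * p (n + 1) - Polynomial.C (t n) * p n)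
    (Λ : Polynomial ℚ →ₗ[ℚ] ℚ)
    (hΛ : ∀ n, Λ (p n) = if n = 0 then 1 else 0) :
    ∀ n, Λ (rr p n) = (-1) ^ n * ∏ i ∈ range n, t (2 * i + 1) := by
  have hxr := X_mul_rr t p hp0 hp1 hp
  intro n
  induction n with
  | zero =>
    have h0 : rr p 0 = 1 := by
      rw [rr, Finset.sum_range_one]
      norm_num [hp1, Polynomial.coeff_X_one]
    rw [h0]
    have := hΛ 0
    rw [hp0] at this
    simp [this]
  | succ n ih =>
    have hrec : rr p (n + 1) = X ^ 2 * rr p n - Polynomial.C (t (2 * n)) * p (2 * n)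
        - Polynomial.C (t (2 * n + 1)) * rr p n := by
      apply mul_left_cancel₀ (Polynomial.X_ne_zero (R := ℚ))
      have h2 := hxr (n + 1)
      have e : 2 * (n + 1) + 1 = 2 * n + 3 := by omega
      rw [e] at h2
      rw [h2]
      have ha1 := hp (2 * n + 1)
      have e1 : 2 * n + 1 + 2 = 2 * n + 3 := by omega
      rw [e1, show 2 * n + 1 + 1 = 2 * n + 2 from by omega] at ha1
      have ha2 := hp (2 * n)
      linear_combination ha1 + X * ha2 - (X ^ 2 - Polynomial.C (t (2 * n + 1))) * hxr n
    have hX2 : Λ (X ^ 2 * rr p n) = Λ (p (2 * n + 2)) + t (2 * n) * Λ (p (2 * n)) := by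
      have : X ^ 2 * rr p n = p (2 * n + 2) + Polynomial.C (t (2 * n)) * p (2 * n) := by
        linear_combination X * hxr n - hp (2 * n)
      rw [this, map_add, lamC]
    rw [hrec, map_sub, map_sub, lamC, lamC, hX2, ih, hΛ, hΛ, prod_range_succ,
      if_neg (by omega : ¬(2 * n + 2 = 0))]
    ring

theorem symmetric_moment_orthogonality
    (t : ℕ → ℚ) (ht : ∀ n, t n ≠ 0)
    (p : ℕ → Polynomial ℚ)
    (hp0 : p 0 = 1) (hp1 : p 1 = X)
    (hp : ∀ n, p (n + 2) = X * p (n + 1) - Polynomial.C (t n) * p n)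
    (v : ℕ → ℕ → ℚ)
    (hv : ∀ n k, v n k = (-1 : ℚ) ^ k * (p n).coeff (n - 2 * k))
    (Λ : Polynomial ℚ →ₗ[ℚ] ℚ)
    (hΛ : ∀ n, Λ (p n) = if n = 0 then 1 else 0)
    (a : ℕ → ℚ) (ha : ∀ n, a n = Λ (X ^ (2 * n)))
    (n m : ℕ) (hm : m ≤ n) :
    ∑ k ∈ range (n + 1), (-1 : ℚ) ^ (n + k) * v (2 * n + 1) k * a (n + m - k)
      = (∏ i ∈ range n, t (2 * i + 1)) * (if m = 0 then 1 else 0) := by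
  have key : ∑ k ∈ range (n + 1), (-1 : ℚ) ^ (n + k) * v (2 * n + 1) k * a (n + m - k)
      = (-1) ^ n * Λ (X ^ (2 * m) * rr p n) := by
    rw [rr, Finset.mul_sum, map_sum, Finset.mul_sum]
    apply Finset.sum_congr rfl
    intro k hk
    have hk' : k ≤ n := by have := Finset.mem_range.mp hk; omega
    rw [hv, ha]
    have hX : X ^ (2 * m) * (Polynomial.C ((p (2 * n + 1)).coeff (2 * n + 1 - 2 * k))
        * X ^ (2 * (n - k)))
        = Polynomial.C ((p (2 * n + 1)).coeff (2 * n + 1 - 2 * k)) * X ^ (2 * (n + m - k)) := by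
      rw [show 2 * (n + m - k) = 2 * (n - k) + 2 * m from by omega, pow_add]
      ring
    rw [hX, lamC]
    have h2 : ((-1 : ℚ)) ^ (n + k) * (-1) ^ k = (-1) ^ n := by
      rw [pow_add, mul_assoc, ← pow_add, ← two_mul, pow_mul]
      norm_num
    linear_combination ((p (2 * n + 1)).coeff (2 * n + 1 - 2 * k)
      * Λ (X ^ (2 * (n + m - k)))) * h2
  rw [key]
  rcases Nat.eq_zero_or_pos m with hm0 | hm1
  · subst hm0
    simp only [Nat.mul_zero, pow_zero, one_mul, if_pos]
    rw [lam_rr t p hp0 hp1 hp Λ hΛ n]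
    rw [← mul_assoc, ← mul_pow]
    norm_num
  · have hne : m ≠ 0 := by omega
    have hsplit : X ^ (2 * m) * rr p n = X ^ (2 * m - 1) * p (2 * n + 1) := by
      have e : 2 * m - 1 + 1 = 2 * m := by omega
      conv_lhs => rw [← e]
      rw [pow_succ, ← X_mul_rr t p hp0 hp1 hp n]
      ring
    rw [hsplit, orth t p hp Λ hΛ (2 * m - 1) (2 * n + 1) (by omega)]
    simp [hne]
end
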